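/- arXiv:math/0305066 — 3 statements merged into one kernel-verified Lean document; each statement's English description precedes it below -/
import Mathlib

section
/- For every n ≥ 2 and T ≥ 1, the number of n×n singular integer matrices with all rows primitive of Euclidean length at most T is at least c·T^{n²−n} for some constant c > 0 depending only on n. -/
/-- Euclidean norm of an integer vector. -/
noncomputable def vnorm {n : ℕ} (v : Fin n → ℤ) : ℝ := Real.sqrt (∑ i, ((v i : ℝ)) ^ 2)

/-- A vector of `ℤ^n` is primitive if the gcd of its coordinates is 1. -/
def IsPrimitive {n : ℕ} (v : Fin n → ℤ) : Prop := Finset.univ.gcd v = 1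

/-- `PN n T` is the number of singular n×n integer matrices all of whose rows are
primitive of Euclidean norm at most `T`. -/
noncomputable def PN (n : ℕ) (T : ℝ) : ℕ :=
  Set.ncard {M : Matrix (Fin n) (Fin n) ℤ | M.det = 0 ∧ ∀ i, IsPrimitive (M i) ∧ vnorm (M i) ≤ T}

/-!
A matrix whose first two rows coincide is singular, so repeating the first of `n - 1` primitive
rows of norm `≤ T` gives a matrix counted by `PN n T`; hence `PN n T ≥ P(T) ^ (n - 1)`, where
`P(T)` is the number of primitive vectors of norm `≤ T`. For `P(T) ≫ T ^ n`, take `K = ⌊T / n⌋`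
and the vectors with entries in `[1, K]` whose first two entries are coprime: sieving over common
divisors `d ≥ 2` shows that at most `K² ∑_{d ≥ 2} d⁻² = (π²/6 - 1) K² < 3K²/4` pairs in `[1, K]²`
are not coprime. For `T < n` a single standard basis vector suffices.
-/

open Finset Real

def coprimePairs (K : ℕ) : Finset (ℕ × ℕ) :=
  {p ∈ Ioc 0 K ×ˢ Ioc 0 K | p.1.Coprime p.2}

lemma card_not_coprime_le (K : ℕ) :
    #{p ∈ Ioc 0 K ×ˢ Ioc 0 K | ¬ p.1.Coprime p.2} ≤ ∑ d ∈ Icc 2 K, (K / d) ^ 2 := by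
  have hsub : {p ∈ Ioc 0 K ×ˢ Ioc 0 K | ¬ p.1.Coprime p.2} ⊆
      (Icc 2 K).biUnion fun d => {x ∈ Ioc 0 K | d ∣ x} ×ˢ {x ∈ Ioc 0 K | d ∣ x} := by
    rintro ⟨a, b⟩ hab
    simp only [mem_filter, mem_product, mem_Ioc] at hab
    obtain ⟨⟨⟨ha0, haK⟩, hb0, hbK⟩, hcop⟩ := hab
    have hga : a.gcd b ≤ a := Nat.gcd_le_left b ha0
    have hg0 : 0 < a.gcd b := Nat.gcd_pos_of_pos_left b ha0
    simp only [mem_biUnion, mem_Icc, mem_product, mem_filter, mem_Ioc]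
    exact ⟨a.gcd b, ⟨by unfold Nat.Coprime at hcop; omega, by omega⟩,
      ⟨⟨ha0, haK⟩, Nat.gcd_dvd_left a b⟩, ⟨hb0, hbK⟩, Nat.gcd_dvd_right a b⟩
  calc _ ≤ _ := card_le_card hsub
    _ ≤ _ := card_biUnion_le
    _ = _ := by simp only [card_product, Nat.Ioc_filter_dvd_card_eq_div, sq]

lemma sum_Icc_two_one_div_sq_le (K : ℕ) : ∑ d ∈ Icc 2 K, 1 / (d : ℝ) ^ 2 ≤ 3 / 4 := by
  have h := sum_le_hasSum (insert 1 (Icc 2 K)) (fun _ _ => by positivity) hasSum_zeta_two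
  rw [sum_insert (by simp)] at h
  nlinarith [pi_lt_d2, pi_pos]

lemma card_coprimePairs_ge (K : ℕ) : (K : ℝ) ^ 2 / 4 ≤ #(coprimePairs K) := by
  have hsplit := card_filter_add_card_filter_not (s := Ioc 0 K ×ˢ Ioc 0 K)
    (fun p : ℕ × ℕ => p.1.Coprime p.2)
  rw [card_product, Nat.card_Ioc, Nat.sub_zero, ← sq] at hsplit
  have hbad : (#{p ∈ Ioc 0 K ×ˢ Ioc 0 K | ¬ p.1.Coprime p.2} : ℝ) ≤ 3 / 4 * K ^ 2 :=
    calc _ ≤ ∑ d ∈ Icc 2 K, ((K / d : ℕ) : ℝ) ^ 2 := by exact_mod_cast card_not_coprime_le K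
      _ ≤ ∑ d ∈ Icc 2 K, (K : ℝ) ^ 2 * (1 / (d : ℝ) ^ 2) := by
        gcongr with d
        rw [mul_one_div, ← div_pow]
        gcongr
        exact Nat.cast_div_le
      _ ≤ 3 / 4 * K ^ 2 := by
        rw [← mul_sum, mul_comm]
        gcongr
        exact sum_Icc_two_one_div_sq_le K
  have htotal : (#(coprimePairs K) : ℝ) + #{p ∈ Ioc 0 K ×ˢ Ioc 0 K | ¬ p.1.Coprime p.2} =
      K ^ 2 := by
    exact_mod_cast hsplit
  linarith

lemma IsCoprime.isPrimitive {n : ℕ} {v : Fin n → ℤ} {i j : Fin n} (h : IsCoprime (v i) (v j)) :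
    IsPrimitive v := by
  rw [IsPrimitive, ← Finset.normalize_gcd, normalize_eq_one]
  exact h.isUnit_of_dvd' (gcd_dvd (mem_univ i)) (gcd_dvd (mem_univ j))

lemma abs_le_vnorm {n : ℕ} (v : Fin n → ℤ) (i : Fin n) : |(v i : ℝ)| ≤ vnorm v := by
  rw [vnorm, ← sqrt_sq_eq_abs]
  exact sqrt_le_sqrt (single_le_sum (fun j _ => sq_nonneg (v j : ℝ)) (mem_univ i))

lemma vnorm_le_sqrt_mul {n : ℕ} {v : Fin n → ℤ} {K : ℝ} (hK : 0 ≤ K) (h : ∀ i, |(v i : ℝ)| ≤ K) :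
    vnorm v ≤ √n * K := by
  have hsum : ∑ i, (v i : ℝ) ^ 2 ≤ n * K ^ 2 := by
    simpa using sum_le_sum fun i (_ : i ∈ univ) => sq_le_sq' (abs_le.mp (h i)).1 (abs_le.mp (h i)).2
  calc vnorm v ≤ √(n * K ^ 2) := sqrt_le_sqrt hsum
    _ = √n * K := by rw [sqrt_mul n.cast_nonneg, sqrt_sq hK]

lemma vnorm_single_one {n : ℕ} (i : Fin n) : vnorm (Pi.single i 1) = 1 := by
  simp [vnorm, Pi.single_apply]

def primitiveBox (m K : ℕ) : Finset (Fin (m + 2) → ℤ) :=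
  (coprimePairs K ×ˢ Fintype.piFinset fun _ : Fin m => Ioc 0 K).image
    fun x => Nat.cast ∘ Fin.cons x.1.1 (Fin.cons x.1.2 x.2)

lemma card_primitiveBox (m K : ℕ) : #(primitiveBox m K) = #(coprimePairs K) * K ^ m := by
  rw [primitiveBox, card_image_of_injective, card_product, Fintype.card_piFinset]
  · simp
  rintro ⟨⟨a, b⟩, w⟩ ⟨⟨a', b'⟩, w'⟩ h
  obtain ⟨rfl, h⟩ := Fin.cons_injective2 (Nat.cast_injective.comp_left h)
  obtain ⟨rfl, rfl⟩ := Fin.cons_injective2 h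
  rfl

lemma card_primitiveBox_ge (m K : ℕ) : (K : ℝ) ^ (m + 2) / 4 ≤ #(primitiveBox m K) := by
  calc (K : ℝ) ^ (m + 2) / 4 = (K : ℝ) ^ 2 / 4 * K ^ m := by ring
    _ ≤ #(coprimePairs K) * K ^ m := by gcongr; exact card_coprimePairs_ge K
    _ = #(primitiveBox m K) := by rw [card_primitiveBox]; push_cast; rfl

lemma isPrimitive_of_mem_primitiveBox {m K : ℕ} {v : Fin (m + 2) → ℤ} (hv : v ∈ primitiveBox m K) :
    IsPrimitive v := by
  obtain ⟨⟨⟨a, b⟩, w⟩, hx, rfl⟩ := mem_image.mp hv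
  simp only [coprimePairs, mem_product, mem_filter] at hx
  exact IsCoprime.isPrimitive (i := 0) (j := 1) (Nat.isCoprime_iff_coprime.mpr hx.1.2)

lemma vnorm_le_of_mem_primitiveBox {m K : ℕ} {v : Fin (m + 2) → ℤ} (hv : v ∈ primitiveBox m K) :
    vnorm v ≤ √(m + 2 : ℕ) * K := by
  obtain ⟨⟨⟨a, b⟩, w⟩, hx, rfl⟩ := mem_image.mp hv
  simp only [coprimePairs, mem_product, mem_filter, mem_Ioc, Fintype.mem_piFinset] at hx
  refine vnorm_le_sqrt_mul K.cast_nonneg fun i => ?_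
  have hle : ∀ i, (Fin.cons a (Fin.cons b w) : Fin (m + 2) → ℕ) i ≤ K :=
    Fin.forall_fin_succ.2 ⟨hx.1.1.1.2, Fin.forall_fin_succ.2 ⟨hx.1.1.2.2, fun k => (hx.2 k).2⟩⟩
  simpa using hle i

lemma finite_setOf_PN (n : ℕ) (T : ℝ) :
    {M : Matrix (Fin n) (Fin n) ℤ |
      M.det = 0 ∧ ∀ i, IsPrimitive (M i) ∧ vnorm (M i) ≤ T}.Finite := by
  refine (Set.Finite.pi fun _ : Fin n => Set.Finite.pi fun _ : Fin n =>
    Set.finite_Icc (-⌈T⌉) ⌈T⌉).subset fun M hM => ?_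
  simp only [Set.mem_pi, Set.mem_univ, true_implies, Set.mem_Icc, ← abs_le]
  intro i j
  exact_mod_cast ((abs_le_vnorm (M i) j).trans ((hM.2 i).2.trans (Int.le_ceil T)))

lemma card_pow_le_PN {m : ℕ} {T : ℝ} (A : Finset (Fin (m + 2) → ℤ))
    (hA : ∀ v ∈ A, IsPrimitive v ∧ vnorm v ≤ T) : #A ^ (m + 1) ≤ PN (m + 2) T := by
  let rows : (Fin (m + 1) → Fin (m + 2) → ℤ) → Matrix (Fin (m + 2)) (Fin (m + 2)) ℤ :=
    fun r => Matrix.of (Fin.cons (r 0) r)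
  have hinj : Function.Injective rows := fun _ _ h =>
    (Fin.cons_injective2 (Matrix.of.injective h)).2
  have hsub : ↑((Fintype.piFinset fun _ => A).image rows) ⊆
      {M : Matrix (Fin (m + 2)) (Fin (m + 2)) ℤ |
        M.det = 0 ∧ ∀ i, IsPrimitive (M i) ∧ vnorm (M i) ≤ T} := by
    intro M hM
    obtain ⟨r, hr, rfl⟩ := mem_image.mp hM
    rw [Fintype.mem_piFinset] at hr
    refine ⟨Matrix.det_zero_of_row_eq (i := 0) (j := 1) zero_ne_one rfl, fun i => ?_⟩
    exact Fin.cases (hA _ (hr 0)) (fun k => hA _ (hr k)) i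
  calc #A ^ (m + 1) = #((Fintype.piFinset fun _ => A).image rows) := by
        rw [card_image_of_injective _ hinj, Fintype.card_piFinset, prod_const, card_univ,
          Fintype.card_fin]
    _ ≤ PN (m + 2) T := by
        rw [PN, ← Set.ncard_coe_finset]
        exact Set.ncard_le_ncard hsub (finite_setOf_PN _ T)

lemma exists_primitive_finset (m : ℕ) : ∃ c > 0, ∀ T : ℝ, 1 ≤ T →
    ∃ A : Finset (Fin (m + 2) → ℤ), (∀ v ∈ A, IsPrimitive v ∧ vnorm v ≤ T) ∧
      c * T ^ (m + 2) ≤ #A := by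
  set n : ℝ := ((m + 2 : ℕ) : ℝ)
  have hn1 : 1 ≤ n := Nat.one_le_cast.mpr (by omega)
  refine ⟨min (1 / (4 * (2 * n) ^ (m + 2))) (1 / n ^ (m + 2)), by positivity, fun T hT => ?_⟩
  rcases lt_or_ge T n with hTn | hTn
  · refine ⟨{Pi.single 0 1}, ?_, ?_⟩
    · simp only [mem_singleton, forall_eq, vnorm_single_one, hT, and_true]
      exact IsCoprime.isPrimitive (i := 0) (j := 0) (by simpa using isCoprime_one_left)
    · calc _ ≤ 1 / n ^ (m + 2) * n ^ (m + 2) := by gcongr; exact min_le_right _ _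
        _ = #({Pi.single 0 1} : Finset (Fin (m + 2) → ℤ)) := by field_simp; simp
  · set K := ⌊T / n⌋₊
    have hKT : T / (2 * n) ≤ K := by
      rw [mul_comm, ← div_div]
      exact (Nat.div_two_lt_floor ((one_le_div₀ (by positivity)).mpr hTn)).le
    refine ⟨primitiveBox m K, fun v hv => ⟨isPrimitive_of_mem_primitiveBox hv, ?_⟩, ?_⟩
    · calc vnorm v ≤ √n * K := vnorm_le_of_mem_primitiveBox hv
        _ ≤ n * (T / n) := by
          gcongr
          · exact sqrt_le_self_iff.mpr (Or.inr hn1)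
          · exact Nat.floor_le (by positivity)
        _ = T := by field_simp
    · calc _ ≤ 1 / (4 * (2 * n) ^ (m + 2)) * T ^ (m + 2) := by gcongr; exact min_le_left _ _
        _ = (T / (2 * n)) ^ (m + 2) / 4 := by rw [div_pow]; ring
        _ ≤ (K : ℝ) ^ (m + 2) / 4 := by gcongr
        _ ≤ #(primitiveBox m K) := card_primitiveBox_ge m K

/-- for `n ≥ 2`, `PNₙ(T) ≫ T^(n²−n)`. -/
theorem PN_lower_bound (n : ℕ) (hn : 2 ≤ n) :
    ∃ c : ℝ, 0 < c ∧ ∀ T : ℝ, 1 ≤ T → c * T ^ (n ^ 2 - n) ≤ (PN n T : ℝ) := by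
  obtain ⟨m, rfl⟩ : ∃ m, n = m + 2 := ⟨n - 2, by omega⟩
  obtain ⟨c, hc, hA⟩ := exists_primitive_finset m
  refine ⟨c ^ (m + 1), by positivity, fun T hT => ?_⟩
  obtain ⟨A, hAT, hcard⟩ := hA T hT
  have hexp : (m + 2) ^ 2 - (m + 2) = (m + 2) * (m + 1) := by
    rw [Nat.sub_eq_of_eq_add]; ring
  calc c ^ (m + 1) * T ^ ((m + 2) ^ 2 - (m + 2)) = (c * T ^ (m + 2)) ^ (m + 1) := by
        rw [hexp, mul_pow, pow_mul]
    _ ≤ (#A : ℝ) ^ (m + 1) := by gcongr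
    _ ≤ PN (m + 2) T := by exact_mod_cast card_pow_le_PN A hAT
end

section
/- Let Λ ⊂ ℝⁿ be a lattice of rank m with a basis λ₁,…,λ_m satisfying |λ₁|·…·|λ_m| ≤ C·det(Λ), ordered by increasing norm, and suppose the ball of radius T in span(Λ) contains m linearly independent vectors of Λ. Then #{v ∈ Λ : |v| ≤ T} = v_m·T^m/det(Λ) + O(T^{m−1}/(|λ₁|·…·|λ_{m−1}|)), where v_m is the volume of the m-dimensional unit ball and the implied constant depends only on m and C. -/
/-- Euclidean norm of a real vector. -/
noncomputable def vnormR {n : ℕ} (v : Fin n → ℝ) : ℝ := Real.sqrt (∑ i, v i ^ 2)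

/-- Volume of the m-dimensional unit ball. -/
noncomputable def unitBallVol (m : ℕ) : ℝ :=
  (MeasureTheory.volume (Metric.ball (0 : EuclideanSpace ℝ (Fin m)) 1)).toReal

/-- Gram determinant of a family of real vectors; its square root is the covolume of
the lattice they generate. -/
noncomputable def gramDetR {n m : ℕ} (lam : Fin m → (Fin n → ℝ)) : ℝ :=
  (Matrix.of fun i j : Fin m => ∑ k, lam i k * lam j k).det

/-!
Let `G` be the Gram matrix of `λ` and `S = G^{1/2}`. Since `SᵀS = G`, the map `a ↦ ∑ aᵢλᵢ`
identifies `Λ ∩ B(T)` with the integer points `a` satisfying `|S a| ≤ T`, and `|det S| = det Λ`;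
let `N` be their number.
On a unit cube `S` moves points by at most `D = ∑ |λᵢ|`, so the unit cubes at these integer
points cover the ellipsoid `|S x| ≤ T - D` and lie inside `|S x| ≤ T + D`; comparing volumes,
`N det Λ` lies between `v_m (T - D)^m` and `v_m (T + D)^m`, hence equals
`v_m T^m + O(D (T + D)^{m-1})`.

It remains to see that `D = O(|λ_m|)` and `|λ_m| = O(T)`. Among `m` independent lattice vectors of
length `≤ T`, one is independent of `λ₁, …, λ_{m-1}`; a crude Hadamard inequality (itself a
consequence of the counting bound) gives `det Λ ≲ |λ₁|⋯|λ_{m-1}| T`, and the hypothesis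
`|λ₁|⋯|λ_m| ≤ C det Λ` turns this into `|λ_m| ≲ T` and `D / det Λ ≲ 1 / (|λ₁|⋯|λ_{m-1}|)`.
-/

open MeasureTheory Matrix Set

lemma exists_notMem_span_of_card_lt {K V ι ι' : Type*} [DivisionRing K] [AddCommGroup V]
    [Module K V] [Fintype ι] [Fintype ι'] {w : ι → V} (hw : LinearIndependent K w) (f : ι' → V)
    (h : Fintype.card ι' < Fintype.card ι) : ∃ j, w j ∉ Submodule.span K (Set.range f) := by
  by_contra! hsub
  have : Module.Finite K (Submodule.span K (Set.range f)) :=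
    FiniteDimensional.span_of_finite K (Set.finite_range f)
  have hle := Submodule.finrank_mono (Submodule.span_le.2 (range_subset_iff.2 hsub))
  rw [finrank_span_eq_card hw] at hle
  have := finrank_range_le_card (R := K) f
  simp only [Set.finrank] at this
  omega

lemma prod_filter_val_lt_eq_prod_castSucc {M : Type*} [CommMonoid M] {k : ℕ}
    (f : Fin (k + 1) → M) :
    ∏ i ∈ Finset.univ.filter (fun i : Fin (k + 1) => (i : ℕ) < k), f i =
      ∏ i : Fin k, f i.castSucc := by
  rw [Finset.prod_filter, Fin.prod_univ_castSucc]
  simp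

lemma sum_le_card_mul_last {k : ℕ} {f : Fin (k + 1) → ℝ} (hf : Monotone f) :
    ∑ i, f i ≤ (k + 1) * f (Fin.last k) := by
  simpa using Finset.sum_le_sum (s := Finset.univ) fun i _ => hf (Fin.le_last i)

lemma abs_sub_mul_pow_le_of_le_of_le {m : ℕ} (hm : 1 ≤ m) {v T D M : ℝ} (hv : 0 ≤ v)
    (hT : 0 ≤ T) (hD : 0 ≤ D) (hM : 0 ≤ M) (hup : M ≤ v * (T + D) ^ m)
    (hlow : D ≤ T → v * (T - D) ^ m ≤ M) :
    |M - v * T ^ m| ≤ v * m * D * (T + D) ^ (m - 1) := by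
  have hTD : T ≤ T + D := by linarith
  have hTpow : T ^ (m - 1) ≤ (T + D) ^ (m - 1) := by gcongr
  rw [abs_sub_le_iff]
  constructor
  · have h := abs_pow_sub_pow_le (T + D) T m
    rw [add_sub_cancel_left, abs_of_nonneg hD, abs_of_nonneg (a := T + D) (by linarith),
      abs_of_nonneg hT, max_eq_left hTD,
      abs_of_nonneg (a := (T + D) ^ m - T ^ m) (sub_nonneg.2 (by gcongr))] at h
    nlinarith [mul_le_mul_of_nonneg_left h hv]
  · by_cases hDT : D ≤ T
    · have h := abs_pow_sub_pow_le T (T - D) m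
      rw [sub_sub_cancel, abs_of_nonneg hD, abs_of_nonneg (a := T - D) (by linarith),
        abs_of_nonneg hT, max_eq_left (by linarith),
        abs_of_nonneg (a := T ^ m - (T - D) ^ m) (sub_nonneg.2 (by gcongr; linarith))] at h
      have h' : D * m * T ^ (m - 1) ≤ D * m * (T + D) ^ (m - 1) := by gcongr
      nlinarith [mul_le_mul_of_nonneg_left (h.trans h') hv, hlow hDT]
    · have hpow : T ^ m = T * T ^ (m - 1) := by rw [← pow_succ', Nat.sub_add_cancel hm]
      have h : T ^ m ≤ m * D * (T + D) ^ (m - 1) := by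
        rw [hpow, mul_assoc]
        refine (mul_le_mul (not_le.1 hDT).le hTpow (by positivity) hD).trans ?_
        exact le_mul_of_one_le_left (by positivity) (by exact_mod_cast hm)
      nlinarith [mul_le_mul_of_nonneg_left h hv]

section VnormR

variable {n : ℕ}

lemma vnormR_eq_norm (v : Fin n → ℝ) : vnormR v = ‖WithLp.toLp 2 v‖ := by
  simp [EuclideanSpace.norm_eq, vnormR, sq_abs]

lemma vnormR_nonneg (v : Fin n → ℝ) : 0 ≤ vnormR v := Real.sqrt_nonneg _

lemma vnormR_pos {v : Fin n → ℝ} (hv : v ≠ 0) : 0 < vnormR v := by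
  simpa [vnormR_eq_norm] using hv

lemma vnormR_add_le (v w : Fin n → ℝ) : vnormR (v + w) ≤ vnormR v + vnormR w := by
  simpa only [vnormR_eq_norm, WithLp.toLp_add] using norm_add_le _ _

lemma vnormR_sub_comm (v w : Fin n → ℝ) : vnormR (v - w) = vnormR (w - v) := by
  simpa only [vnormR_eq_norm, WithLp.toLp_sub] using norm_sub_rev _ _

lemma vnormR_smul (c : ℝ) (v : Fin n → ℝ) : vnormR (c • v) = |c| * vnormR v := by
  simp only [vnormR_eq_norm, WithLp.toLp_smul, norm_smul, Real.norm_eq_abs]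

lemma vnormR_sum_le {ι : Type*} (s : Finset ι) (f : ι → Fin n → ℝ) :
    vnormR (∑ i ∈ s, f i) ≤ ∑ i ∈ s, vnormR (f i) := by
  simpa only [vnormR_eq_norm, WithLp.toLp_sum] using norm_sum_le _ _

lemma vnormR_eq_sqrt_dotProduct (v : Fin n → ℝ) : vnormR v = Real.sqrt (v ⬝ᵥ v) := by
  simp [vnormR, dotProduct, sq]

lemma volume_setOf_vnormR_le {r : ℝ} (hr : 0 ≤ r) :
    volume {y : Fin n → ℝ | vnormR y ≤ r} = ENNReal.ofReal (unitBallVol n * r ^ n) := by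
  have hpre : {y : Fin n → ℝ | vnormR y ≤ r} = WithLp.toLp 2 ⁻¹' Metric.closedBall 0 r := by
    ext y; simp [vnormR_eq_norm]
  rw [hpre, (PiLp.volume_preserving_toLp (Fin n)).measure_preimage
    measurableSet_closedBall.nullMeasurableSet, Measure.addHaar_closedBall _ _ hr,
    finrank_euclideanSpace_fin, unitBallVol, ENNReal.ofReal_mul (by positivity),
    ENNReal.ofReal_toReal measure_ball_lt_top.ne, mul_comm]

lemma unitBallVol_pos (n : ℕ) : 0 < unitBallVol n :=
  ENNReal.toReal_pos (Metric.measure_ball_pos volume _ one_pos).ne' measure_ball_lt_top.ne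

end VnormR

section IntegerPoints

variable {m : ℕ}

def unitCube (a : Fin m → ℤ) : Set (Fin m → ℝ) := Set.pi univ fun i => Ico (a i : ℝ) (a i + 1)

lemma mem_unitCube {a : Fin m → ℤ} {x : Fin m → ℝ} : x ∈ unitCube a ↔ ∀ i, ⌊x i⌋ = a i := by
  simp [unitCube, Int.floor_eq_iff]

lemma volume_biUnion_unitCube (s : Set (Fin m → ℤ)) :
    volume (⋃ a ∈ s, unitCube a) = s.encard := by
  have hcube : ∀ a : Fin m → ℤ, volume (unitCube a) = 1 := fun a => by simp [unitCube, volume_pi_pi]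
  have hdisj : s.PairwiseDisjoint unitCube := fun a _ b _ hab =>
    Set.disjoint_left.2 fun x hxa hxb =>
      hab (funext fun i => (mem_unitCube.1 hxa i).symm.trans (mem_unitCube.1 hxb i))
  rw [measure_biUnion s.to_countable hdisj
    fun a _ => MeasurableSet.univ_pi fun _ => measurableSet_Ico]
  simp only [hcube, ENNReal.tsum_set_one]

def intPointsMulVecLe (S : Matrix (Fin m) (Fin m) ℝ) (T : ℝ) : Set (Fin m → ℤ) :=
  {a | vnormR (S *ᵥ fun i => (a i : ℝ)) ≤ T}

lemma mulVec_eq_sum_smul_transpose (S : Matrix (Fin m) (Fin m) ℝ) (x : Fin m → ℝ) :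
    S *ᵥ x = ∑ i, x i • Sᵀ i := by
  ext j; simp [mulVec, dotProduct, mul_comm]

lemma vnormR_mulVec_le_of_abs_le_one (S : Matrix (Fin m) (Fin m) ℝ) {x : Fin m → ℝ}
    (hx : ∀ i, |x i| ≤ 1) : vnormR (S *ᵥ x) ≤ ∑ i, vnormR (Sᵀ i) := by
  rw [mulVec_eq_sum_smul_transpose]
  refine (vnormR_sum_le _ _).trans (Finset.sum_le_sum fun i _ => ?_)
  rw [vnormR_smul]
  exact mul_le_of_le_one_left (vnormR_nonneg _) (hx i)

lemma vnormR_mulVec_sub_le_of_mem_unitCube (S : Matrix (Fin m) (Fin m) ℝ) {a : Fin m → ℤ}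
    {x : Fin m → ℝ} (hx : x ∈ unitCube a) :
    vnormR (S *ᵥ x - S *ᵥ fun i => (a i : ℝ)) ≤ ∑ i, vnormR (Sᵀ i) := by
  rw [← mulVec_sub]
  refine vnormR_mulVec_le_of_abs_le_one S fun i => ?_
  have := (mem_unitCube.1 hx i).symm ▸ Int.floor_le (x i)
  have := (mem_unitCube.1 hx i).symm ▸ Int.lt_floor_add_one (x i)
  rw [Pi.sub_apply, abs_le]
  constructor <;> linarith

lemma biUnion_unitCube_subset (S : Matrix (Fin m) (Fin m) ℝ) (T : ℝ) :
    ⋃ a ∈ intPointsMulVecLe S T, unitCube a ⊆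
      {x | vnormR (S *ᵥ x) ≤ T + ∑ i, vnormR (Sᵀ i)} := by
  simp only [iUnion_subset_iff]
  intro a ha x hx
  have := vnormR_add_le (S *ᵥ x - S *ᵥ fun i => (a i : ℝ)) (S *ᵥ fun i => (a i : ℝ))
  rw [sub_add_cancel] at this
  have := vnormR_mulVec_sub_le_of_mem_unitCube S hx
  simp only [intPointsMulVecLe, mem_ofPred_eq] at ha ⊢
  linarith

lemma subset_biUnion_unitCube (S : Matrix (Fin m) (Fin m) ℝ) (T : ℝ) :
    {x | vnormR (S *ᵥ x) ≤ T - ∑ i, vnormR (Sᵀ i)} ⊆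
      ⋃ a ∈ intPointsMulVecLe S T, unitCube a := by
  intro x hx
  have hxa : x ∈ unitCube fun i => ⌊x i⌋ := mem_unitCube.2 fun i => rfl
  refine mem_biUnion ?_ hxa
  have := vnormR_add_le (S *ᵥ (fun i => (⌊x i⌋ : ℝ)) - S *ᵥ x) (S *ᵥ x)
  rw [sub_add_cancel, vnormR_sub_comm] at this
  have := vnormR_mulVec_sub_le_of_mem_unitCube S hxa
  simp only [intPointsMulVecLe, mem_ofPred_eq] at hx ⊢
  linarith

lemma volume_setOf_vnormR_mulVec_le {S : Matrix (Fin m) (Fin m) ℝ} (hS : S.det ≠ 0) {r : ℝ}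
    (hr : 0 ≤ r) :
    volume {x | vnormR (S *ᵥ x) ≤ r} = ENNReal.ofReal (unitBallVol m * r ^ m / |S.det|) := by
  have hpre : {x | vnormR (S *ᵥ x) ≤ r} = toLin' S ⁻¹' {y | vnormR y ≤ r} := by
    ext x; simp [toLin'_apply]
  rw [hpre, Measure.addHaar_preimage_linearMap _ (by rwa [LinearMap.det_toLin']),
    volume_setOf_vnormR_le hr, LinearMap.det_toLin', ← ENNReal.ofReal_mul (abs_nonneg _),
    abs_inv, inv_mul_eq_div]

lemma encard_intPointsMulVecLe_le {S : Matrix (Fin m) (Fin m) ℝ} (hS : S.det ≠ 0) {T : ℝ}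
    (hT : 0 ≤ T) :
    ((intPointsMulVecLe S T).encard : ENNReal) ≤
      ENNReal.ofReal (unitBallVol m * (T + ∑ i, vnormR (Sᵀ i)) ^ m / |S.det|) := by
  have hD : 0 ≤ ∑ i, vnormR (Sᵀ i) := Finset.sum_nonneg fun i _ => vnormR_nonneg _
  rw [← volume_biUnion_unitCube, ← volume_setOf_vnormR_mulVec_le hS (by positivity)]
  exact measure_mono (biUnion_unitCube_subset S T)

lemma intPointsMulVecLe_finite {S : Matrix (Fin m) (Fin m) ℝ} (hS : S.det ≠ 0) {T : ℝ}
    (hT : 0 ≤ T) : (intPointsMulVecLe S T).Finite := by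
  rw [← Set.encard_ne_top_iff, ← ENat.toENNReal_ne_top]
  exact ne_top_of_le_ne_top ENNReal.ofReal_ne_top (encard_intPointsMulVecLe_le hS hT)

lemma ncard_intPointsMulVecLe_mul_abs_det_le {S : Matrix (Fin m) (Fin m) ℝ} (hS : S.det ≠ 0)
    {T : ℝ} (hT : 0 ≤ T) :
    (intPointsMulVecLe S T).ncard * |S.det| ≤ unitBallVol m * (T + ∑ i, vnormR (Sᵀ i)) ^ m := by
  have hD : 0 ≤ ∑ i, vnormR (Sᵀ i) := Finset.sum_nonneg fun i _ => vnormR_nonneg _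
  have hvol := encard_intPointsMulVecLe_le hS hT
  rw [← (intPointsMulVecLe_finite hS hT).cast_ncard_eq, ENat.toENNReal_coe] at hvol
  rw [← le_div_iff₀ (abs_pos.2 hS)]
  simpa using ENNReal.toReal_le_of_le_ofReal (by have := unitBallVol_pos m; positivity) hvol

lemma le_ncard_intPointsMulVecLe_mul_abs_det {S : Matrix (Fin m) (Fin m) ℝ} (hS : S.det ≠ 0)
    {T : ℝ} (hDT : ∑ i, vnormR (Sᵀ i) ≤ T) :
    unitBallVol m * (T - ∑ i, vnormR (Sᵀ i)) ^ m ≤ (intPointsMulVecLe S T).ncard * |S.det| := by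
  have hD : 0 ≤ ∑ i, vnormR (Sᵀ i) := Finset.sum_nonneg fun i _ => vnormR_nonneg _
  have hvol : ENNReal.ofReal (unitBallVol m * (T - ∑ i, vnormR (Sᵀ i)) ^ m / |S.det|) ≤
      ((intPointsMulVecLe S T).encard : ENNReal) := by
    rw [← volume_biUnion_unitCube, ← volume_setOf_vnormR_mulVec_le hS (by linarith)]
    exact measure_mono (subset_biUnion_unitCube S T)
  rw [← (intPointsMulVecLe_finite hS (hD.trans hDT)).cast_ncard_eq, ENat.toENNReal_coe,
    ENNReal.ofReal_le_iff_le_toReal (ENNReal.natCast_ne_top _)] at hvol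
  rw [← div_le_iff₀ (abs_pos.2 hS)]
  simpa using hvol

end IntegerPoints

section Gram

open scoped MatrixOrder

variable {n m : ℕ} (lam : Fin m → Fin n → ℝ)

lemma gramDetR_eq_det_gram : gramDetR lam = (gram ℝ fun i => WithLp.toLp 2 (lam i)).det := by
  unfold gramDetR; congr 1; ext i j; simp [gram_apply, PiLp.inner_apply, mul_comm]

noncomputable def sqrtGram : Matrix (Fin m) (Fin m) ℝ :=
  CFC.sqrt (gram ℝ fun i => WithLp.toLp 2 (lam i))

lemma transpose_sqrtGram : (sqrtGram lam)ᵀ = sqrtGram lam := by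
  simpa [sqrtGram, conjTranspose_eq_transpose_of_trivial] using
    (CFC.sqrt_nonneg (gram ℝ fun i => WithLp.toLp 2 (lam i))).posSemidef.isHermitian.eq

lemma transpose_sqrtGram_mul_sqrtGram :
    (sqrtGram lam)ᵀ * sqrtGram lam = gram ℝ fun i => WithLp.toLp 2 (lam i) := by
  rw [transpose_sqrtGram]
  exact CFC.sqrt_mul_sqrt_self _ (posSemidef_gram ℝ _).nonneg

lemma vnormR_sum_smul (x : Fin m → ℝ) :
    vnormR (∑ i, x i • lam i) = vnormR (sqrtGram lam *ᵥ x) := by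
  rw [vnormR_eq_norm, norm_eq_sqrt_real_inner, vnormR_eq_sqrt_dotProduct]
  congr 1
  have := star_dotProduct_gram_mulVec (𝕜 := ℝ) (fun i => WithLp.toLp 2 (lam i)) x x
  rw [star_trivial, ← transpose_sqrtGram_mul_sqrtGram, ← mulVec_mulVec, dotProduct_mulVec,
    ← mulVec_transpose, transpose_transpose] at this
  simpa [dotProduct_comm] using this.symm

lemma vnormR_transpose_sqrtGram (i : Fin m) : vnormR ((sqrtGram lam)ᵀ i) = vnormR (lam i) := by
  have := vnormR_sum_smul lam (Pi.single i 1)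
  rwa [mulVec_single_one, Finset.sum_eq_single i (fun j _ hj => by simp [hj]) (by simp),
    Pi.single_eq_same, one_smul, eq_comm] at this

lemma sqrt_gramDetR_eq_abs_det_sqrtGram : Real.sqrt (gramDetR lam) = |(sqrtGram lam).det| := by
  rw [gramDetR_eq_det_gram, ← transpose_sqrtGram_mul_sqrtGram, det_mul, det_transpose,
    ← sq, Real.sqrt_sq_eq_abs]

variable {lam}

lemma det_sqrtGram_ne_zero (hli : LinearIndependent ℝ lam) : (sqrtGram lam).det ≠ 0 := by
  rw [← isUnit_iff_ne_zero, ← isUnit_iff_isUnit_det, ← mulVec_injective_iff_isUnit]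
  intro x y hxy
  have h0 : vnormR (∑ i, (x - y) i • lam i) = 0 := by
    rw [vnormR_sum_smul, mulVec_sub, hxy, sub_self, vnormR_eq_norm]; simp
  rw [vnormR_eq_norm, norm_eq_zero, WithLp.toLp_eq_zero] at h0
  exact sub_eq_zero.1 (funext (Fintype.linearIndependent_iff.1 hli _ h0))

lemma sqrt_gramDetR_pos (hli : LinearIndependent ℝ lam) : 0 < Real.sqrt (gramDetR lam) := by
  rw [sqrt_gramDetR_eq_abs_det_sqrtGram]
  exact abs_pos.2 (det_sqrtGram_ne_zero hli)

end Gram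

section LatticeBall

variable {n m : ℕ}

def latticeBall (lam : Fin m → Fin n → ℝ) (T : ℝ) : Set (Fin n → ℝ) :=
  {v | v ∈ Submodule.span ℤ (Set.range lam) ∧ vnormR v ≤ T}

variable {lam : Fin m → Fin n → ℝ}

lemma latticeBall_eq_image (T : ℝ) :
    latticeBall lam T =
      (fun a : Fin m → ℤ => ∑ i, (a i : ℝ) • lam i) '' intPointsMulVecLe (sqrtGram lam) T := by
  ext v
  simp only [latticeBall, intPointsMulVecLe, mem_ofPred_eq, mem_image,
    Submodule.mem_span_range_iff_exists_fun, Int.cast_smul_eq_zsmul, ← vnormR_sum_smul]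
  constructor
  · rintro ⟨⟨a, rfl⟩, hv⟩
    exact ⟨a, hv, rfl⟩
  · rintro ⟨a, hv, rfl⟩
    exact ⟨⟨a, rfl⟩, hv⟩

lemma ncard_latticeBall (hli : LinearIndependent ℝ lam) (T : ℝ) :
    (latticeBall lam T).ncard = (intPointsMulVecLe (sqrtGram lam) T).ncard := by
  refine latticeBall_eq_image T ▸ Set.ncard_image_of_injective _ fun a b hab => ?_
  exact funext fun i => by exact_mod_cast Fintype.linearIndependent_iffₛ.1 hli _ _ hab i

lemma latticeBall_finite (hli : LinearIndependent ℝ lam) {T : ℝ} (hT : 0 ≤ T) :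
    (latticeBall lam T).Finite :=
  latticeBall_eq_image T ▸ (intPointsMulVecLe_finite (det_sqrtGram_ne_zero hli) hT).image _

lemma ncard_latticeBall_mul_le (hli : LinearIndependent ℝ lam) {T : ℝ} (hT : 0 ≤ T) :
    (latticeBall lam T).ncard * Real.sqrt (gramDetR lam) ≤
      unitBallVol m * (T + ∑ i, vnormR (lam i)) ^ m := by
  simpa only [ncard_latticeBall hli, sqrt_gramDetR_eq_abs_det_sqrtGram,
    vnormR_transpose_sqrtGram] using
    ncard_intPointsMulVecLe_mul_abs_det_le (det_sqrtGram_ne_zero hli) hT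

lemma le_ncard_latticeBall_mul (hli : LinearIndependent ℝ lam) {T : ℝ}
    (hDT : ∑ i, vnormR (lam i) ≤ T) :
    unitBallVol m * (T - ∑ i, vnormR (lam i)) ^ m ≤
      (latticeBall lam T).ncard * Real.sqrt (gramDetR lam) := by
  simp_rw [← vnormR_transpose_sqrtGram lam] at hDT ⊢
  simpa only [ncard_latticeBall hli, sqrt_gramDetR_eq_abs_det_sqrtGram] using
    le_ncard_intPointsMulVecLe_mul_abs_det (det_sqrtGram_ne_zero hli) hDT

end LatticeBall

section Hadamard

variable {n m : ℕ} {lam u : Fin m → Fin n → ℝ}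

/-- The box `{∑ cᵢ uᵢ : cᵢ ∈ {0, …, ⌊R / |uᵢ|⌋}}` injects into the lattice ball of radius `m R`. -/
lemma prod_floor_add_one_le_ncard_latticeBall (hli : LinearIndependent ℝ lam)
    (hu : LinearIndependent ℝ u) (huΛ : ∀ i, u i ∈ Submodule.span ℤ (Set.range lam)) {R : ℝ}
    (hR : 0 ≤ R) :
    ∏ i, (⌊R / vnormR (u i)⌋₊ + 1) ≤ (latticeBall lam (m * R)).ncard := by
  have hfin : Finite (latticeBall lam (m * R)) :=
    (latticeBall_finite hli (by positivity)).to_subtype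
  let F : (∀ i, Fin (⌊R / vnormR (u i)⌋₊ + 1)) → latticeBall lam (m * R) := fun c =>
    ⟨∑ i, ((c i : ℕ) : ℝ) • u i, by
      refine ⟨Submodule.sum_mem _ fun i _ => ?_, (vnormR_sum_le _ _).trans ?_⟩
      · exact_mod_cast Submodule.smul_of_tower_mem _ (c i : ℕ) (huΛ i)
      · calc ∑ i, vnormR (((c i : ℕ) : ℝ) • u i) ≤ ∑ _i : Fin m, R :=
              Finset.sum_le_sum fun i _ => ?_
          _ = m * R := by simp
        rw [vnormR_smul, Nat.abs_cast, ← le_div_iff₀ (vnormR_pos (hu.ne_zero i))]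
        exact (Nat.cast_le.2 (Nat.lt_succ_iff.1 (c i).isLt)).trans
          (Nat.floor_le (div_nonneg hR (vnormR_nonneg _)))⟩
  have hF : Function.Injective F := fun c d hcd => funext fun i => Fin.ext <| by
    exact_mod_cast Fintype.linearIndependent_iffₛ.1 hu _ _ (congrArg Subtype.val hcd) i
  simpa [Nat.card_coe_set_eq] using Nat.card_le_card_of_injective F hF

/-- Weak Hadamard inequality, from counting the box above for `R = 1 + ∑ |λᵢ|`. -/
lemma sqrt_gramDetR_le_mul_prod_vnormR (hli : LinearIndependent ℝ lam)
    (hu : LinearIndependent ℝ u) (huΛ : ∀ i, u i ∈ Submodule.span ℤ (Set.range lam)) :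
    Real.sqrt (gramDetR lam) ≤ unitBallVol m * (m + 1) ^ m * ∏ i, vnormR (u i) := by
  set D := ∑ i, vnormR (lam i)
  have hD : 0 ≤ D := Finset.sum_nonneg fun i _ => vnormR_nonneg _
  set R := 1 + D
  have hR : 0 < R := by positivity
  have hbox : R ^ m ≤ (∏ i, ((⌊R / vnormR (u i)⌋₊ : ℝ) + 1)) * ∏ i, vnormR (u i) := by
    rw [← Finset.prod_mul_distrib, ← Fin.prod_const]
    refine Finset.prod_le_prod (fun _ _ => hR.le) fun i _ => ?_
    exact (div_le_iff₀ (vnormR_pos (hu.ne_zero i))).1 (Nat.lt_floor_add_one _).le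
  have hcount : ∏ i, ((⌊R / vnormR (u i)⌋₊ : ℝ) + 1) ≤ (latticeBall lam (m * R)).ncard := by
    exact_mod_cast prod_floor_add_one_le_ncard_latticeBall hli hu huΛ hR.le
  have hupper := ncard_latticeBall_mul_le hli (T := m * R) (by positivity)
  have hs := Real.sqrt_nonneg (gramDetR lam)
  have hP : 0 ≤ ∏ i, vnormR (u i) := Finset.prod_nonneg fun i _ => vnormR_nonneg _
  have hv := (unitBallVol_pos m).le
  refine le_of_mul_le_mul_left ?_ (pow_pos hR m)
  calc R ^ m * Real.sqrt (gramDetR lam)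
      ≤ (latticeBall lam (m * R)).ncard * Real.sqrt (gramDetR lam) * ∏ i, vnormR (u i) := by
        nlinarith [mul_le_mul_of_nonneg_right hcount hP]
    _ ≤ unitBallVol m * ((m + 1) * R) ^ m * ∏ i, vnormR (u i) := by
        refine mul_le_mul_of_nonneg_right (hupper.trans ?_) hP
        gcongr
        linarith
    _ = R ^ m * (unitBallVol m * (m + 1) ^ m * ∏ i, vnormR (u i)) := by rw [mul_pow]; ring

end Hadamard

/-- Replacing `λ_{k+1}` by one of the `wⱼ` independent of `λ₁, …, λₖ`, the weak Hadamard
inequality bounds `det Λ` by `|λ₁|⋯|λₖ| T`; compare with `|λ₁|⋯|λₖ₊₁| ≤ C det Λ`. -/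
lemma vnormR_last_le_mul {n k : ℕ} {lam w : Fin (k + 1) → Fin n → ℝ} {C T : ℝ}
    (hli : LinearIndependent ℝ lam) (hC : 0 ≤ C)
    (hred : ∏ i, vnormR (lam i) ≤ C * Real.sqrt (gramDetR lam)) (hw : LinearIndependent ℝ w)
    (hwΛ : ∀ i, w i ∈ Submodule.span ℤ (Set.range lam) ∧ vnormR (w i) ≤ T) :
    vnormR (lam (Fin.last k)) ≤ C * (unitBallVol (k + 1) * ((k + 1 : ℕ) + 1) ^ (k + 1)) * T := by
  set P := ∏ i : Fin k, vnormR (lam i.castSucc)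
  have hP : 0 < P := Finset.prod_pos fun i _ => vnormR_pos (hli.ne_zero _)
  obtain ⟨j, hj⟩ := exists_notMem_span_of_card_lt hw (fun i : Fin k => lam i.castSucc) (by simp)
  let u : Fin (k + 1) → Fin n → ℝ := Fin.snoc (fun i => lam i.castSucc) (w j)
  have hu : LinearIndependent ℝ u :=
    linearIndependent_finSnoc.2 ⟨hli.comp _ (Fin.castSucc_injective k), hj⟩
  have huΛ : ∀ i, u i ∈ Submodule.span ℤ (Set.range lam) := Fin.lastCases
    (by simpa [u] using (hwΛ j).1)
    fun i => by simpa [u] using Submodule.subset_span (Set.mem_range_self _)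
  have hdet := sqrt_gramDetR_le_mul_prod_vnormR hli hu huΛ
  rw [Fin.prod_univ_castSucc] at hred hdet
  simp only [u, Fin.snoc_castSucc, Fin.snoc_last] at hdet
  refine le_of_mul_le_mul_left ?_ hP
  calc P * vnormR (lam (Fin.last k)) ≤ C * Real.sqrt (gramDetR lam) := hred
    _ ≤ C * (unitBallVol (k + 1) * ((k + 1 : ℕ) + 1) ^ (k + 1) * (P * T)) := by
        refine mul_le_mul_of_nonneg_left (hdet.trans ?_) hC
        have := (unitBallVol_pos (k + 1)).le
        gcongr
        exact (hwΛ j).2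
    _ = P * (C * (unitBallVol (k + 1) * ((k + 1 : ℕ) + 1) ^ (k + 1)) * T) := by ring

lemma abs_ncard_latticeBall_sub_le {n m : ℕ} (hm : 1 ≤ m) {lam : Fin m → Fin n → ℝ}
    (hli : LinearIndependent ℝ lam) {T : ℝ} (hT : 0 ≤ T) :
    |((latticeBall lam T).ncard : ℝ) - unitBallVol m * T ^ m / Real.sqrt (gramDetR lam)| ≤
      unitBallVol m * m * (∑ i, vnormR (lam i)) * (T + ∑ i, vnormR (lam i)) ^ (m - 1) /
        Real.sqrt (gramDetR lam) := by
  have hs := sqrt_gramDetR_pos hli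
  rw [← mul_div_cancel_right₀ ((latticeBall lam T).ncard : ℝ) hs.ne', ← sub_div, abs_div,
    abs_of_pos hs]
  refine div_le_div_of_nonneg_right ?_ hs.le
  exact abs_sub_mul_pow_le_of_le_of_le hm (unitBallVol_pos m).le hT
    (Finset.sum_nonneg fun i _ => vnormR_nonneg _) (by positivity) (ncard_latticeBall_mul_le hli hT)
    (le_ncard_latticeBall_mul hli)

/-- counting points of a rank-m lattice in `ℝ^n`, spanned by an almost-reduced
basis `λ₁,…,λ_m` (sorted by norm, with `∏|λᵢ| ≤ C·det Λ`), in a ball of radius `T`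
containing m linearly independent lattice vectors:
`#{v ∈ Λ : |v| ≤ T} = v_m·T^m/det(Λ) + O(T^{m−1}/(|λ₁|⋯|λ_{m−1}|))`,
the implied constant depending only on `m` and `C`. -/
theorem lattice_ball_count (m : ℕ) (hm : 1 ≤ m) (C : ℝ) (hC : 0 < C) :
    ∃ K : ℝ, 0 < K ∧ ∀ (n : ℕ) (lam : Fin m → (Fin n → ℝ)) (T : ℝ),
      LinearIndependent ℝ lam →
      (∀ i j : Fin m, i ≤ j → vnormR (lam i) ≤ vnormR (lam j)) →
      (∏ i, vnormR (lam i)) ≤ C * Real.sqrt (gramDetR lam) →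
      (∃ w : Fin m → (Fin n → ℝ), LinearIndependent ℝ w ∧
        ∀ i, w i ∈ Submodule.span ℤ (Set.range lam) ∧ vnormR (w i) ≤ T) →
      |(Set.ncard {v : Fin n → ℝ | v ∈ Submodule.span ℤ (Set.range lam) ∧ vnormR v ≤ T} : ℝ) -
          unitBallVol m * T ^ m / Real.sqrt (gramDetR lam)| ≤
        K * T ^ (m - 1) /
          ∏ i ∈ Finset.univ.filter (fun i : Fin m => (i : ℕ) < m - 1), vnormR (lam i) := by
  obtain ⟨k, rfl⟩ : ∃ k, m = k + 1 := ⟨m - 1, by omega⟩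
  set v := unitBallVol (k + 1)
  set c := C * (v * ((k + 1 : ℕ) + 1) ^ (k + 1))
  have hv := unitBallVol_pos (k + 1)
  refine ⟨v * (k + 1) ^ 2 * C * (1 + (k + 1) * c) ^ k, by positivity, ?_⟩
  rintro n lam T hli hsort hred ⟨w, hw, hwΛ⟩
  have hT : 0 < T := (vnormR_pos (hw.ne_zero 0)).trans_le (hwΛ 0).2
  have hL : vnormR (lam (Fin.last k)) ≤ c * T := vnormR_last_le_mul hli hC.le hred hw hwΛ
  have hD : ∑ i, vnormR (lam i) ≤ (k + 1) * vnormR (lam (Fin.last k)) :=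
    sum_le_card_mul_last (f := fun i => vnormR (lam i)) hsort
  have hD0 : 0 ≤ ∑ i, vnormR (lam i) := Finset.sum_nonneg fun i _ => vnormR_nonneg _
  have hs := sqrt_gramDetR_pos hli
  set P := ∏ i : Fin k, vnormR (lam i.castSucc)
  have hP : 0 < P := Finset.prod_pos fun i _ => vnormR_pos (hli.ne_zero _)
  rw [Fin.prod_univ_castSucc] at hred
  have hDP : (∑ i, vnormR (lam i)) * P ≤ (k + 1) * C * Real.sqrt (gramDetR lam) := by
    nlinarith [mul_le_mul_of_nonneg_right hD hP.le]
  have hTD : (T + ∑ i, vnormR (lam i)) ^ k ≤ ((1 + (k + 1) * c) * T) ^ k := by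
    gcongr
    nlinarith
  simp only [Nat.add_sub_cancel, prod_filter_val_lt_eq_prod_castSucc]
  refine (abs_ncard_latticeBall_sub_le (Nat.le_add_left 1 k) hli hT.le).trans ?_
  rw [div_le_div_iff₀ hs hP]
  push_cast
  calc _ = v * (k + 1) * (T + ∑ i, vnormR (lam i)) ^ k * ((∑ i, vnormR (lam i)) * P) := by ring
    _ ≤ v * (k + 1) * ((1 + (k + 1) * c) * T) ^ k * ((k + 1) * C * Real.sqrt (gramDetR lam)) := by
        gcongr
    _ = _ := by rw [mul_pow]; ring
end

section
/- For any constant A > 0, Σ_Λ P_Λ(T)³ ≪ T⁶·log log T, where the sum ranges over primitive rank-2 sublattices Λ ⊂ ℤ³ that are bounded by T (possess a basis of vectors of norm ≤ T) and satisfy T²/(log T)^A < det(Λ) ≤ T², and P_Λ(T) is the number of primitive vectors of ℤ³ in Λ of norm at most T. -/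
def toRealVec {n : ℕ} (v : Fin n → ℤ) : Fin n → ℝ := fun i => (v i : ℝ)

/-- A sublattice `Λ ⊆ ℤ^n` is primitive if `Λ = ℤ^n ∩ span_ℝ(Λ)`. -/
def IsPrimitiveLattice {n : ℕ} (Λ : Submodule ℤ (Fin n → ℤ)) : Prop :=
  ∀ v : Fin n → ℤ, v ∈ Λ ↔ toRealVec v ∈ Submodule.span ℝ (toRealVec '' (Λ : Set (Fin n → ℤ)))

/-- The orthogonal complement lattice `Λ^⊥ = {v ∈ ℤ^n : v·u = 0 for all u ∈ Λ}`. -/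
def orthLat {n : ℕ} (Λ : Submodule ℤ (Fin n → ℤ)) : Submodule ℤ (Fin n → ℤ) where
  carrier := {v | ∀ u ∈ Λ, ∑ i, v i * u i = 0}
  zero_mem' := by intro u _; simp
  add_mem' := by
    intro a b ha hb u hu
    have h : ∑ i, (a + b) i * u i = (∑ i, a i * u i) + ∑ i, b i * u i := by
      simp [add_mul, Finset.sum_add_distrib]
    rw [h, ha u hu, hb u hu, add_zero]
  smul_mem' := by
    intro c v hv u hu
    have h : ∑ i, (c • v) i * u i = c * ∑ i, v i * u i := by
      simp [Finset.mul_sum, mul_assoc]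
    rw [h, hv u hu, mul_zero]

/-- Determinant of the Gram matrix of a basis of a sublattice of `ℤ^n`;
its square root is the covolume of the lattice. -/
noncomputable def gramDet {n m : ℕ} {Λ : Submodule ℤ (Fin n → ℤ)} (b : Module.Basis (Fin m) ℤ Λ) : ℤ :=
  (Matrix.of fun i j : Fin m => ∑ k, (b i).1 k * (b j).1 k).det

/-- `N_Λ(T)`: the number of nonzero vectors of `Λ` of norm at most `T`. -/
noncomputable def latCount {n : ℕ} (Λ : Submodule ℤ (Fin n → ℤ)) (T : ℝ) : ℕ :=
  Set.ncard {v : Fin n → ℤ | v ∈ Λ ∧ v ≠ 0 ∧ vnorm v ≤ T}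

/-- `P_Λ(T)`: the number of primitive vectors of `ℤ^n` lying in `Λ` of norm at most `T`. -/
noncomputable def latPrimCount {n : ℕ} (Λ : Submodule ℤ (Fin n → ℤ)) (T : ℝ) : ℕ :=
  Set.ncard {v : Fin n → ℤ | v ∈ Λ ∧ IsPrimitive v ∧ vnorm v ≤ T}


/-!
For a rank-2 lattice `Λ` with basis `u, w` of vectors of norm at most `T`, write `v ∈ Λ` as
`c₀ u + c₁ w`. Then `u × v = c₁ (u × w)`, so `|c₁| ≤ |u| T / det Λ`, and for fixed `c₁` the
coefficients `c₀` differ by at most `2T / |u|`; hence `P_Λ(T) ≤ N_Λ(T) ≤ 15 T² / det Λ`.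
A primitive `Λ` is cut out by its normal vector `λ = u × w`, with `|λ| = det Λ`, so the sum is at
most `(15 T²)³ Σ |λ|⁻³` over distinct nonzero integer vectors with `T² / (log T)^A < |λ| ≤ T²`.
Each dyadic shell `Y/2 < |λ| ≤ Y` holds at most `(3Y)³` of them and contributes `O(1)`, and there
are `O(A log log T)` shells.
-/

open Matrix

section IntegerVectors

variable {n : ℕ}

lemma toRealVec_sub (v w : Fin n → ℤ) : toRealVec (v - w) = toRealVec v - toRealVec w := by
  ext i; simp [toRealVec]

lemma toRealVec_smul (c : ℤ) (v : Fin n → ℤ) : toRealVec (c • v) = (c : ℝ) • toRealVec v := by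
  ext i; simp [toRealVec]

lemma vnorm_eq_norm (v : Fin n → ℤ) :
    vnorm v = ‖(WithLp.toLp 2 (toRealVec v) : EuclideanSpace ℝ (Fin n))‖ := by
  simp [vnorm, EuclideanSpace.norm_eq, toRealVec]

lemma vnorm_nonneg (v : Fin n → ℤ) : 0 ≤ vnorm v := Real.sqrt_nonneg _

lemma vnorm_sq (v : Fin n → ℤ) : vnorm v ^ 2 = ((v ⬝ᵥ v : ℤ) : ℝ) := by
  rw [vnorm, Real.sq_sqrt (by positivity)]
  simp [dotProduct, sq]

lemma vnorm_sub_le (v w : Fin n → ℤ) : vnorm (v - w) ≤ vnorm v + vnorm w := by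
  simp only [vnorm_eq_norm, toRealVec_sub, WithLp.toLp_sub]
  exact norm_sub_le _ _

lemma vnorm_smul (c : ℤ) (v : Fin n → ℤ) : vnorm (c • v) = |(c : ℝ)| * vnorm v := by
  simp only [vnorm_eq_norm, toRealVec_smul, WithLp.toLp_smul, norm_smul, Real.norm_eq_abs]

lemma abs_apply_le_vnorm (v : Fin n → ℤ) (i : Fin n) : |(v i : ℝ)| ≤ vnorm v := by
  simpa [vnorm_eq_norm, toRealVec] using
    PiLp.norm_apply_le (WithLp.toLp 2 (toRealVec v) : EuclideanSpace ℝ (Fin n)) i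

lemma one_le_vnorm {v : Fin n → ℤ} (hv : v ≠ 0) : 1 ≤ vnorm v := by
  have hpos : 0 < v ⬝ᵥ v :=
    lt_of_le_of_ne (Finset.sum_nonneg fun i _ => mul_self_nonneg (v i))
      (Ne.symm (dotProduct_self_eq_zero.not.mpr hv))
  have : (1 : ℝ) ≤ vnorm v ^ 2 := by rw [vnorm_sq]; exact_mod_cast hpos
  nlinarith [vnorm_nonneg v]

end IntegerVectors

lemma vnorm_cross_le (u w : Fin 3 → ℤ) : vnorm (u ⨯₃ w) ≤ vnorm u * vnorm w := by
  refine (pow_le_pow_iff_left₀ (vnorm_nonneg _)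
    (mul_nonneg (vnorm_nonneg u) (vnorm_nonneg w)) two_ne_zero).mp ?_
  rw [mul_pow, vnorm_sq, vnorm_sq, vnorm_sq, cross_dot_cross, dotProduct_comm w u]
  push_cast
  nlinarith [sq_nonneg ((u ⬝ᵥ w : ℤ) : ℝ)]

section Boxes

variable {ι : Type*} [Fintype ι]

lemma setOf_abs_le_subset_piFinset [DecidableEq ι] (x : ι → ℝ) :
    {v : ι → ℤ | ∀ i, |(v i : ℝ)| ≤ x i} ⊆
      Fintype.piFinset fun i => Finset.Icc (-⌊x i⌋) ⌊x i⌋ := by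
  intro v hv
  rw [Finset.mem_coe, Fintype.mem_piFinset]
  intro i
  have := abs_le.mp (hv i)
  exact Finset.mem_Icc.mpr
    ⟨neg_le.mp (Int.le_floor.mpr (by push_cast; linarith)), Int.le_floor.mpr this.2⟩

lemma finite_setOf_abs_le (x : ι → ℝ) : {v : ι → ℤ | ∀ i, |(v i : ℝ)| ≤ x i}.Finite := by
  classical
  exact (Finset.finite_toSet _).subset (setOf_abs_le_subset_piFinset x)

lemma ncard_setOf_abs_le_le {x : ι → ℝ} (hx : ∀ i, 0 ≤ x i) :
    ({v : ι → ℤ | ∀ i, |(v i : ℝ)| ≤ x i}.ncard : ℝ) ≤ ∏ i, (2 * x i + 1) := by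
  classical
  have hcard (i : ι) : ((Finset.Icc (-⌊x i⌋) ⌊x i⌋).card : ℝ) = 2 * ⌊x i⌋ + 1 := by
    have : ((Finset.Icc (-⌊x i⌋) ⌊x i⌋).card : ℤ) = 2 * ⌊x i⌋ + 1 := by
      rw [Int.card_Icc]; have := Int.floor_nonneg.mpr (hx i); omega
    exact_mod_cast this
  calc ({v : ι → ℤ | ∀ i, |(v i : ℝ)| ≤ x i}.ncard : ℝ)
      ≤ (Fintype.piFinset fun i => Finset.Icc (-⌊x i⌋) ⌊x i⌋).card := by
        rw [← Set.ncard_coe_finset]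
        exact_mod_cast
          Set.ncard_le_ncard (setOf_abs_le_subset_piFinset x) (Finset.finite_toSet _)
    _ = ∏ i, (2 * (⌊x i⌋ : ℝ) + 1) := by
        rw [Fintype.card_piFinset]; push_cast; simp only [hcard]
    _ ≤ ∏ i, (2 * x i + 1) := by
        refine Finset.prod_le_prod (fun i _ => ?_) fun i _ => ?_
        · have : (0 : ℝ) ≤ ⌊x i⌋ := by exact_mod_cast Int.floor_nonneg.mpr (hx i)
          positivity
        · linarith [Int.floor_le (x i)]

end Boxes

lemma finite_and_ncard_le_of_fibers {S : Set (Fin 2 → ℤ)} {x y : ℝ}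
    (hx : 0 ≤ x) (hy : 0 ≤ y)
    (hfib : ∀ c ∈ S, ∀ c' ∈ S, c 1 = c' 1 → |((c 0 - c' 0 : ℤ) : ℝ)| ≤ x)
    (hsnd : ∀ c ∈ S, |(c 1 : ℝ)| ≤ y) :
    S.Finite ∧ (S.ncard : ℝ) ≤ (2 * x + 1) * (2 * y + 1) := by
  -- translating each fibre `c 1 = j` by one of its points maps `S` injectively into a box
  let base : ℤ → ℤ := fun j => Classical.epsilon fun i => ![i, j] ∈ S
  let shift : (Fin 2 → ℤ) → (Fin 2 → ℤ) := fun c => ![c 0 - base (c 1), c 1]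
  have hbase : ∀ c ∈ S, ![base (c 1), c 1] ∈ S := fun c hc =>
    Classical.epsilon_spec (p := fun i => ![i, c 1] ∈ S)
      ⟨c 0, by rwa [show ![c 0, c 1] = c by ext i; fin_cases i <;> rfl]⟩
  have hinj : Set.InjOn shift S := fun c _ c' _ h => by
    have h0 := congrFun h 0
    have h1 : c 1 = c' 1 := congrFun h 1
    simp only [shift, Matrix.cons_val_zero, h1, sub_left_inj] at h0
    ext i; fin_cases i
    exacts [h0, h1]
  have hbox : shift '' S ⊆ {v | ∀ i, |(v i : ℝ)| ≤ ![x, y] i} := by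
    rintro _ ⟨c, hc, rfl⟩ i
    fin_cases i
    · simpa [shift] using hfib c hc _ (hbase c hc) rfl
    · simpa [shift] using hsnd c hc
  have hxy : ∀ i, 0 ≤ ![x, y] i := fun i => by fin_cases i <;> simpa
  refine ⟨Set.Finite.of_finite_image ((finite_setOf_abs_le _).subset hbox) hinj, ?_⟩
  rw [← hinj.ncard_image]
  calc ((shift '' S).ncard : ℝ)
      ≤ ({v : Fin 2 → ℤ | ∀ i, |(v i : ℝ)| ≤ ![x, y] i}.ncard : ℝ) := by
        exact_mod_cast Set.ncard_le_ncard hbox (finite_setOf_abs_le _)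
    _ ≤ ∏ i, (2 * ![x, y] i + 1) := ncard_setOf_abs_le_le hxy
    _ = (2 * x + 1) * (2 * y + 1) := by simp [Fin.prod_univ_two]

lemma finite_and_ncard_mul_vnorm_cross_le {u w : Fin 3 → ℤ} {T : ℝ} (huw : u ⨯₃ w ≠ 0)
    (hu : vnorm u ≤ T) (hw : vnorm w ≤ T) :
    {c : Fin 2 → ℤ | vnorm (c 0 • u + c 1 • w) ≤ T}.Finite ∧
      ({c : Fin 2 → ℤ | vnorm (c 0 • u + c 1 • w) ≤ T}.ncard : ℝ) * vnorm (u ⨯₃ w)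
        ≤ 15 * T ^ 2 := by
  set S := {c : Fin 2 → ℤ | vnorm (c 0 • u + c 1 • w) ≤ T}
  set d := vnorm (u ⨯₃ w)
  set a := vnorm u
  have hu0 : u ≠ 0 := by rintro rfl; simp at huw
  have ha : 1 ≤ a := one_le_vnorm hu0
  have hd : 1 ≤ d := one_le_vnorm huw
  have hT : 0 ≤ T := by linarith
  have hda : d ≤ a * T :=
    (vnorm_cross_le u w).trans (mul_le_mul_of_nonneg_left hw (by positivity))
  have hfib : ∀ c ∈ S, ∀ c' ∈ S, c 1 = c' 1 → |((c 0 - c' 0 : ℤ) : ℝ)| ≤ 2 * T / a := by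
    intro c hc c' hc' h
    rw [le_div_iff₀ (by positivity), ← vnorm_smul]
    have : (c 0 - c' 0) • u = (c 0 • u + c 1 • w) - (c' 0 • u + c' 1 • w) := by
      rw [h]; module
    rw [this]
    have hv : vnorm (c 0 • u + c 1 • w) ≤ T := hc
    have hv' : vnorm (c' 0 • u + c' 1 • w) ≤ T := hc'
    linarith [vnorm_sub_le (c 0 • u + c 1 • w) (c' 0 • u + c' 1 • w)]
  have hsnd : ∀ c ∈ S, |(c 1 : ℝ)| ≤ a * T / d := by
    intro c hc
    rw [le_div_iff₀ (by positivity), ← vnorm_smul]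
    have : c 1 • (u ⨯₃ w) = u ⨯₃ (c 0 • u + c 1 • w) := by
      rw [map_add, map_smul, map_smul, cross_self, smul_zero, zero_add]
    rw [this]
    exact (vnorm_cross_le _ _).trans (mul_le_mul_of_nonneg_left hc (by positivity))
  obtain ⟨hfin, hcard⟩ := finite_and_ncard_le_of_fibers
    (div_nonneg (by linarith) (by linarith)) (div_nonneg (by nlinarith) (by linarith)) hfib hsnd
  refine ⟨hfin, ?_⟩
  have hdaT : d / a ≤ T := (div_le_iff₀ (by positivity)).mpr (by linarith)
  calc (S.ncard : ℝ) * d ≤ (2 * (2 * T / a) + 1) * (2 * (a * T / d) + 1) * d := by gcongr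
    _ = 8 * T ^ 2 + 4 * T * (d / a) + 2 * a * T + d := by field_simp; ring
    _ ≤ 15 * T ^ 2 := by nlinarith

lemma IsPrimitive.ne_zero {n : ℕ} {v : Fin n → ℤ} (hv : IsPrimitive v) : v ≠ 0 := by
  rintro rfl
  have hzero : Finset.univ.gcd (0 : Fin n → ℤ) = 0 := Finset.gcd_eq_zero_iff.mpr fun _ _ => rfl
  exact zero_ne_one (hzero.symm.trans hv)

lemma latPrimCount_le_latCount {n : ℕ} (Λ : Submodule ℤ (Fin n → ℤ)) (T : ℝ) :
    latPrimCount Λ T ≤ latCount Λ T := by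
  refine Set.ncard_le_ncard (fun v ⟨hv, hprim, hvT⟩ => ⟨hv, hprim.ne_zero, hvT⟩) ?_
  exact (finite_setOf_abs_le fun _ => T).subset fun v hv i =>
    (abs_apply_le_vnorm v i).trans hv.2.2

lemma IsPrimitiveLattice.mem_of_smul_mem {n : ℕ} {Λ : Submodule ℤ (Fin n → ℤ)}
    (hΛ : IsPrimitiveLattice Λ) {N : ℤ} (hN : N ≠ 0) {v : Fin n → ℤ} (hv : N • v ∈ Λ) :
    v ∈ Λ := by
  rw [hΛ, toRealVec_smul] at hv
  rw [hΛ]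
  have := Submodule.smul_mem _ (N : ℝ)⁻¹ hv
  rwa [smul_smul, inv_mul_cancel₀ (Int.cast_ne_zero.mpr hN), one_smul] at this

section RankTwoLattices

variable {Λ : Submodule ℤ (Fin 3 → ℤ)} (b : Module.Basis (Fin 2) ℤ Λ)

lemma exists_smul_add_smul_eq_of_mem {v : Fin 3 → ℤ} (hv : v ∈ Λ) :
    ∃ c : Fin 2 → ℤ, c 0 • (b 0 : Fin 3 → ℤ) + c 1 • (b 1 : Fin 3 → ℤ) = v :=
  ⟨b.repr ⟨v, hv⟩, by
    simpa only [Fin.sum_univ_two, Submodule.coe_add, Submodule.coe_smul] using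
      congrArg Subtype.val (b.sum_repr ⟨v, hv⟩)⟩

lemma cross_basis_ne_zero : (b 0 : Fin 3 → ℤ) ⨯₃ (b 1 : Fin 3 → ℤ) ≠ 0 := by
  intro h
  have hli := b.linearIndependent.map' Λ.subtype (Submodule.ker_subtype Λ)
  rw [show Λ.subtype ∘ b = ![(b 0 : Fin 3 → ℤ), b 1] by ext i; fin_cases i <;> rfl] at hli
  have hrel := cross_cross_eq_smul_sub_smul (b 0 : Fin 3 → ℤ) (b 1) (b 0)
  rw [h, map_zero, LinearMap.zero_apply, eq_comm, sub_eq_zero] at hrel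
  have := (LinearIndependent.pair_iff.mp hli (-((b 1 : Fin 3 → ℤ) ⬝ᵥ b 0))
    ((b 0 : Fin 3 → ℤ) ⬝ᵥ b 0) (by rw [hrel, neg_smul, neg_add_cancel])).2
  exact b.ne_zero 0 (Subtype.ext (dotProduct_self_eq_zero.mp this))

lemma gramDet_eq_dotProduct_cross :
    gramDet b = ((b 0 : Fin 3 → ℤ) ⨯₃ b 1) ⬝ᵥ ((b 0 : Fin 3 → ℤ) ⨯₃ b 1) := by
  rw [gramDet, Matrix.det_fin_two, cross_dot_cross]
  rfl

lemma sqrt_gramDet_eq_vnorm_cross :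
    √(gramDet b : ℝ) = vnorm ((b 0 : Fin 3 → ℤ) ⨯₃ b 1) := by
  rw [gramDet_eq_dotProduct_cross, ← vnorm_sq, Real.sqrt_sq (vnorm_nonneg _)]

lemma latCount_mul_sqrt_gramDet_le {T : ℝ} (hb : ∀ i, vnorm (b i : Fin 3 → ℤ) ≤ T) :
    (latCount Λ T : ℝ) * √(gramDet b : ℝ) ≤ 15 * T ^ 2 := by
  obtain ⟨hfin, hcard⟩ :=
    finite_and_ncard_mul_vnorm_cross_le (cross_basis_ne_zero b) (hb 0) (hb 1)
  have hsub : {v | v ∈ Λ ∧ v ≠ 0 ∧ vnorm v ≤ T} ⊆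
      (fun c : Fin 2 → ℤ => c 0 • (b 0 : Fin 3 → ℤ) + c 1 • (b 1 : Fin 3 → ℤ)) ''
        {c | vnorm (c 0 • (b 0 : Fin 3 → ℤ) + c 1 • (b 1 : Fin 3 → ℤ)) ≤ T} := by
    rintro v ⟨hv, -, hvT⟩
    obtain ⟨c, rfl⟩ := exists_smul_add_smul_eq_of_mem b hv
    exact ⟨c, hvT, rfl⟩
  have hle : latCount Λ T ≤ _ :=
    (Set.ncard_le_ncard hsub (hfin.image _)).trans (Set.ncard_image_le hfin)
  rw [sqrt_gramDet_eq_vnorm_cross]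
  exact le_trans (mul_le_mul_of_nonneg_right (by exact_mod_cast hle) (vnorm_nonneg _)) hcard

lemma IsPrimitiveLattice.mem_iff_dotProduct_cross_eq_zero (hΛ : IsPrimitiveLattice Λ)
    (v : Fin 3 → ℤ) : v ∈ Λ ↔ v ⬝ᵥ ((b 0 : Fin 3 → ℤ) ⨯₃ b 1) = 0 := by
  constructor
  · intro hv
    obtain ⟨c, rfl⟩ := exists_smul_add_smul_eq_of_mem b hv
    simp only [add_dotProduct, smul_dotProduct, dot_self_cross, dot_cross_self, smul_zero,
      add_zero]
  · intro hv
    set u : Fin 3 → ℤ := (b 0 : Fin 3 → ℤ)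
    set w : Fin 3 → ℤ := (b 1 : Fin 3 → ℤ)
    refine hΛ.mem_of_smul_mem (dotProduct_self_eq_zero.not.mpr (cross_basis_ne_zero b)) ?_
    -- `v ⬝ᵥ (u ⨯₃ w) = 0` makes `(u ⨯₃ w) ⨯₃ (v ⨯₃ (u ⨯₃ w))` a multiple of `v`
    have key : ((u ⨯₃ w) ⬝ᵥ (u ⨯₃ w)) • v =
        (u ⨯₃ w) ⨯₃ ((v ⬝ᵥ w) • u - (u ⬝ᵥ v) • w) := by
      rw [← cross_cross_eq_smul_sub_smul', cross_cross_eq_smul_sub_smul', hv, zero_smul,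
        sub_zero]
    rw [key, map_sub, map_smul, map_smul, cross_cross_eq_smul_sub_smul,
      cross_cross_eq_smul_sub_smul]
    have hu : u ∈ Λ := (b 0).2
    have hw : w ∈ Λ := (b 1).2
    apply_rules [Submodule.sub_mem, Submodule.smul_mem]

lemma IsPrimitiveLattice.eq_of_cross_basis_eq {Λ' : Submodule ℤ (Fin 3 → ℤ)}
    (hΛ : IsPrimitiveLattice Λ) (hΛ' : IsPrimitiveLattice Λ') (b' : Module.Basis (Fin 2) ℤ Λ')
    (h : (b 0 : Fin 3 → ℤ) ⨯₃ b 1 = (b' 0 : Fin 3 → ℤ) ⨯₃ b' 1) : Λ = Λ' := by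
  ext v
  rw [hΛ.mem_iff_dotProduct_cross_eq_zero b, hΛ'.mem_iff_dotProduct_cross_eq_zero b', h]

end RankTwoLattices

section Shells

variable {n : ℕ}

lemma sum_inv_vnorm_pow_le_of_dyadic {t : Finset (Fin n → ℤ)} {Y : ℝ}
    (ht : ∀ v ∈ t, v ≠ 0 ∧ Y < 2 * vnorm v ∧ vnorm v ≤ Y) :
    ∑ v ∈ t, (vnorm v ^ n)⁻¹ ≤ 6 ^ n := by
  rcases t.eq_empty_or_nonempty with rfl | ⟨v₀, hv₀⟩
  · simp
  have hY : 1 ≤ Y := (one_le_vnorm (ht v₀ hv₀).1).trans (ht v₀ hv₀).2.2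
  have hcard : (t.card : ℝ) ≤ (3 * Y) ^ n :=
    calc (t.card : ℝ) ≤ ({v : Fin n → ℤ | ∀ i, |(v i : ℝ)| ≤ Y}.ncard : ℝ) := by
          rw [← Set.ncard_coe_finset]
          exact_mod_cast Set.ncard_le_ncard
            (fun v hv i => (abs_apply_le_vnorm v i).trans (ht v hv).2.2) (finite_setOf_abs_le _)
      _ ≤ ∏ _i : Fin n, (2 * Y + 1) := ncard_setOf_abs_le_le fun _ => by linarith
      _ ≤ (3 * Y) ^ n := by
          rw [Finset.prod_const, Finset.card_univ, Fintype.card_fin]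
          gcongr
          linarith
  have hterm : ∀ v ∈ t, (vnorm v ^ n)⁻¹ ≤ (2 / Y) ^ n := fun v hv => by
    rw [← inv_pow]
    refine pow_le_pow_left₀ (inv_nonneg.mpr (vnorm_nonneg v)) ?_ n
    rw [inv_le_comm₀ (by linarith [one_le_vnorm (ht v hv).1]) (by positivity), inv_div]
    linarith [(ht v hv).2.1]
  calc ∑ v ∈ t, (vnorm v ^ n)⁻¹ ≤ t.card * (2 / Y) ^ n := by
        simpa using Finset.sum_le_sum hterm
    _ ≤ (3 * Y) ^ n * (2 / Y) ^ n := by gcongr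
    _ = 6 ^ n := by
        rw [← mul_pow]
        congr 1
        field_simp
        norm_num

lemma sum_inv_vnorm_pow_le {s : Finset (Fin n → ℤ)} {X R : ℝ} (hR : 1 ≤ R)
    (hs : ∀ v ∈ s, v ≠ 0 ∧ X < R * vnorm v ∧ vnorm v ≤ X) :
    ∑ v ∈ s, (vnorm v ^ n)⁻¹ ≤ 6 ^ n * (Real.logb 2 R + 1) := by
  have hv0 : ∀ v ∈ s, 0 < vnorm v := fun v hv => one_pos.trans_le (one_le_vnorm (hs v hv).1)
  have hy : ∀ v ∈ s, 1 ≤ X / vnorm v := fun v hv => (one_le_div (hv0 v hv)).mpr (hs v hv).2.2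
  have hyR : ∀ v ∈ s, X / vnorm v < R := fun v hv => (div_lt_iff₀ (hv0 v hv)).mpr (hs v hv).2.1
  let shell : (Fin n → ℤ) → ℕ := fun v => Nat.log 2 ⌊X / vnorm v⌋₊
  set K := Nat.log 2 ⌊R⌋₊
  have hshell : ∀ v ∈ s, shell v ∈ Finset.range (K + 1) := fun v hv =>
    Finset.mem_range_succ_iff.mpr (Nat.log_mono_right (Nat.floor_le_floor (hyR v hv).le))
  rw [← Finset.sum_fiberwise_of_maps_to hshell]
  have hK : (K : ℝ) ≤ Real.logb 2 R :=
    (Real.natLog_le_logb _ _).trans (Real.logb_le_logb_of_le (by norm_num)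
      (by exact_mod_cast Nat.floor_pos.mpr hR) (Nat.floor_le (by linarith)))
  calc ∑ j ∈ Finset.range (K + 1), ∑ v ∈ s with shell v = j, (vnorm v ^ n)⁻¹
      ≤ ∑ j ∈ Finset.range (K + 1), (6 : ℝ) ^ n :=
        Finset.sum_le_sum fun j _ =>
          sum_inv_vnorm_pow_le_of_dyadic (Y := X / 2 ^ j) fun v hv => ?_
    _ ≤ 6 ^ n * (Real.logb 2 R + 1) := by
        rw [Finset.sum_const, Finset.card_range, nsmul_eq_mul, mul_comm]
        push_cast
        gcongr
  -- `X / 2 ^ (j + 1) < vnorm v ≤ X / 2 ^ j` for `j = shell v`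
  obtain ⟨hvs, rfl⟩ := Finset.mem_filter.mp hv
  have hy0 : 0 ≤ X / vnorm v := by linarith [hy v hvs]
  have hlow : (2 : ℝ) ^ shell v ≤ X / vnorm v := by
    exact_mod_cast (Nat.le_floor_iff hy0).mp
      (Nat.pow_log_le_self 2 (Nat.floor_pos.mpr (hy v hvs)).ne')
  have hhigh : X / vnorm v < 2 ^ (shell v + 1) := by
    exact_mod_cast (Nat.floor_lt hy0).mp (Nat.lt_pow_succ_log_self one_lt_two _)
  refine ⟨(hs v hvs).1, ?_, ?_⟩
  · rw [div_lt_iff₀ (by positivity)]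
    rw [div_lt_iff₀ (hv0 v hvs), pow_succ] at hhigh
    linarith
  · rw [le_div_iff₀ (by positivity), mul_comm]
    rwa [le_div_iff₀ (hv0 v hvs)] at hlow

end Shells

lemma sum_latPrimCount_pow_three_le {T R : ℝ} (hR : 1 ≤ R)
    (s : Finset (Submodule ℤ (Fin 3 → ℤ)))
    (hs : ∀ Λ ∈ s, IsPrimitiveLattice Λ ∧ ∃ b : Module.Basis (Fin 2) ℤ Λ,
      (∀ i, vnorm (b i : Fin 3 → ℤ) ≤ T) ∧ T ^ 2 < R * √(gramDet b : ℝ) ∧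
        √(gramDet b : ℝ) ≤ T ^ 2) :
    ∑ Λ ∈ s, (latPrimCount Λ T : ℝ) ^ 3 ≤ 15 ^ 3 * 6 ^ 3 * T ^ 6 * (Real.logb 2 R + 1) := by
  rw [← Finset.sum_attach]
  choose hprim b hbT hlow hhigh using fun Λ : s => hs Λ Λ.2
  let normal : s → Fin 3 → ℤ := fun Λ => (b Λ 0 : Fin 3 → ℤ) ⨯₃ b Λ 1
  have hnormal : ∀ Λ, vnorm (normal Λ) = √(gramDet (b Λ) : ℝ) := fun Λ =>
    (sqrt_gramDet_eq_vnorm_cross (b Λ)).symm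
  have hinj : Set.InjOn normal s.attach := fun Λ _ Λ' _ h =>
    Subtype.ext ((hprim Λ).eq_of_cross_basis_eq (b Λ) (hprim Λ') (b Λ') h)
  have hcube : ∀ Λ : s,
      (latPrimCount Λ.1 T : ℝ) ^ 3 ≤ (15 * T ^ 2) ^ 3 * (vnorm (normal Λ) ^ 3)⁻¹ := by
    intro Λ
    have hpos : 0 < vnorm (normal Λ) := one_pos.trans_le (one_le_vnorm (cross_basis_ne_zero _))
    rw [← div_eq_mul_inv, ← div_pow]
    refine pow_le_pow_left₀ (Nat.cast_nonneg _) ?_ 3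
    rw [le_div_iff₀ hpos, hnormal]
    exact le_trans (mul_le_mul_of_nonneg_right (by exact_mod_cast latPrimCount_le_latCount _ _)
      (Real.sqrt_nonneg _)) (latCount_mul_sqrt_gramDet_le (b Λ) (hbT Λ))
  have hshell : ∀ v ∈ s.attach.image normal,
      v ≠ 0 ∧ T ^ 2 < R * vnorm v ∧ vnorm v ≤ T ^ 2 := by
    simp only [Finset.mem_image, Finset.mem_attach, true_and, forall_exists_index]
    rintro _ Λ rfl
    exact ⟨cross_basis_ne_zero _, hnormal Λ ▸ hlow Λ, hnormal Λ ▸ hhigh Λ⟩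
  calc ∑ Λ ∈ s.attach, (latPrimCount Λ.1 T : ℝ) ^ 3
      ≤ ∑ Λ ∈ s.attach, (15 * T ^ 2) ^ 3 * (vnorm (normal Λ) ^ 3)⁻¹ :=
        Finset.sum_le_sum fun Λ _ => hcube Λ
    _ = (15 * T ^ 2) ^ 3 * ∑ v ∈ s.attach.image normal, (vnorm v ^ 3)⁻¹ := by
        rw [Finset.sum_image hinj, Finset.mul_sum]
    _ ≤ (15 * T ^ 2) ^ 3 * (6 ^ 3 * (Real.logb 2 R + 1)) := by
        gcongr
        exact sum_inv_vnorm_pow_le hR hshell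
    _ = 15 ^ 3 * 6 ^ 3 * T ^ 6 * (Real.logb 2 R + 1) := by ring

lemma exp_one_le_log_of_sixteen_le {T : ℝ} (hT : 16 ≤ T) : Real.exp 1 ≤ Real.log T := by
  have h16 : Real.exp 1 < Real.log 16 := by
    rw [show (16 : ℝ) = 2 ^ 4 by norm_num, Real.log_pow]
    push_cast
    linarith [Real.exp_one_lt_d9, Real.log_two_gt_d9]
  exact h16.le.trans (Real.log_le_log (by norm_num) hT)

/-- for any `A > 0`,
`Σ_Λ P_Λ(T)³ ≪ T⁶·log log T`, summing over primitive rank-2 sublattices `Λ ⊆ ℤ³`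
bounded by `T` with `T²/(log T)^A < det(Λ) ≤ T²`. -/
theorem sum_cubes_large_determinant (A : ℝ) (hA : 0 < A) :
    ∃ K : ℝ, 0 < K ∧ ∀ T : ℝ, 16 ≤ T →
      (∑' Λ : {Λ : Submodule ℤ (Fin 3 → ℤ) // IsPrimitiveLattice Λ ∧
          Module.finrank ℤ Λ = 2 ∧
          ∃ b : Module.Basis (Fin 2) ℤ Λ, (∀ i, vnorm (b i).1 ≤ T) ∧
            T ^ 2 / Real.log T ^ A < Real.sqrt ((gramDet b : ℝ)) ∧
            Real.sqrt ((gramDet b : ℝ)) ≤ T ^ 2},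
        ((latPrimCount Λ.1 T : ℝ)) ^ 3) ≤ K * T ^ 6 * Real.log (Real.log T) := by
  refine ⟨15 ^ 3 * 6 ^ 3 * (A / Real.log 2 + 1), by positivity, fun T hT => ?_⟩
  have hlogT : 1 ≤ Real.log T :=
    (Real.one_le_exp zero_le_one).trans (exp_one_le_log_of_sixteen_le hT)
  have hloglog : 1 ≤ Real.log (Real.log T) := by
    rw [← Real.log_exp 1]
    exact Real.log_le_log (Real.exp_pos 1) (exp_one_le_log_of_sixteen_le hT)
  have hR : 1 ≤ Real.log T ^ A := Real.one_le_rpow hlogT hA.le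
  refine tsum_le_of_sum_le' (by positivity) fun s => ?_
  have hsum := sum_latPrimCount_pow_three_le hR (s.map (Function.Embedding.subtype _)) <| by
    simp only [Finset.mem_map, Function.Embedding.coe_subtype, forall_exists_index, and_imp]
    rintro _ ⟨Λ, hΛ, -, b, hb, hlow, hhigh⟩ - rfl
    exact ⟨hΛ, b, hb, (div_lt_iff₀' (by positivity)).mp hlow, hhigh⟩
  rw [Finset.sum_map] at hsum
  refine hsum.trans ?_
  have hlogb : Real.logb 2 (Real.log T ^ A) + 1 ≤ (A / Real.log 2 + 1) * Real.log (Real.log T) := by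
    rw [Real.logb, Real.log_rpow (by linarith), add_mul, one_mul, mul_div_right_comm]
    gcongr
  calc _ ≤ 15 ^ 3 * 6 ^ 3 * T ^ 6 * ((A / Real.log 2 + 1) * Real.log (Real.log T)) := by gcongr
    _ = _ := by ring
end
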